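/- For every K ≥ 0 and ε > 0 there exists δ > 0 (depending only on K, ε, T and the network data, not on φ) with the following property: for every absolutely continuous path φ : [0,T] → ℝ₊^R with I_T(φ) ≤ K and every finite collection of pairwise nonoverlapping intervals [t_j, t_{j+1}] ⊆ [0,T] with Σ_j (t_{j+1} − t_j) ≤ δ, one has Σ_j Σ_{ij ∈ R} |φ_ij(t_{j+1}) − φ_ij(t_j)| ≤ ε. -/

import Mathlib

open Classical Filter MeasureTheory
open scoped ENNReal

noncomputable section

/-- The M/M/1 cost `l(D‖λ,μ)` that a suitably normalized `M/M/1` queue with arrival rate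
`λ` and service rate `μ` follows the drift `D`.  (Lean's conventions `Real.log 0 = 0` and
`0 * y = 0` implement the convention `0 · log 0 = 0`.) -/
def mmCost (D lam mu : ℝ) : ℝ :=
  D * Real.log ((D + Real.sqrt (D ^ 2 + 4 * lam * mu)) / (2 * lam))
    + lam + mu - Real.sqrt (D ^ 2 + 4 * lam * mu)

/-- The relative entropy `I_p(ν‖λ)` of Poisson processes of intensities `ν` and `λ`.
(Lean's conventions `x / 0 = 0`, `Real.log 0 = 0` and `0 * y = 0` implement the
conventions `0/0 = 0` and `0 · log 0 = 0`.) -/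
def poissonEntropy (nu lam : ℝ) : ℝ := nu * Real.log (nu / lam) - nu + lam

/-- A star network: a finite set `S` of channels with capacities `C i > 0`, and a set `R`
of routes, each route `r` being an unordered pair of distinct channels
`{fst r, snd r}`, with arrival rates `lam r > 0` and service parameters `mu r > 0`. -/
structure StarNetwork (S R : Type*) where
  /-- one endpoint of a route -/
  fst : R → S
  /-- the other endpoint of a route -/
  snd : R → S
  fst_ne_snd : ∀ r, fst r ≠ snd r
  /-- the capacity of each channel -/
  C : S → ℝ
  C_pos : ∀ i, 0 < C i
  /-- the arrival rate on each route -/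
  lam : R → ℝ
  lam_pos : ∀ r, 0 < lam r
  /-- the service parameter of each route -/
  mu : R → ℝ
  mu_pos : ∀ r, 0 < mu r

namespace StarNetwork

variable {S R : Type*} [Fintype S] [Fintype R]

/-- `N.touches i r` means that channel `i` is one of the two endpoints of route `r`. -/
def touches (N : StarNetwork S R) (i : S) (r : R) : Prop :=
  N.fst r = i ∨ N.snd r = i

/-- The load `x_i = ∑_{j : ij ∈ R} x_ij` of channel `i`. -/
def load (N : StarNetwork S R) (x : R → ℝ) (i : S) : ℝ :=
  ∑ r : R, if N.touches i r then x r else 0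

/-- The service rate `μ_ij(x) = μ_ij · x_ij · min (C_i / x_i) (C_j / x_j)` if `x_ij > 0`,
and `μ_ij(x) = 0` if `x_ij = 0`. -/
def srv (N : StarNetwork S R) (x : R → ℝ) (r : R) : ℝ :=
  if 0 < x r then
    N.mu r * x r *
      min (N.C (N.fst r) / N.load x (N.fst r)) (N.C (N.snd r) / N.load x (N.snd r))
  else 0

/-- The face `Λ(x) = {ij ∈ R : x_ij > 0}` of saturated routes. -/
def face (N : StarNetwork S R) (x : R → ℝ) : Set R := {r | 0 < x r}

/-- The jammed routes `Λ₁(x)`: routes `ij` with `x_ij = 0` such that some route of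
`Λ(x)` contains `i` or contains `j`. -/
def jammed (N : StarNetwork S R) (x : R → ℝ) : Set R :=
  {r | x r = 0 ∧ ∃ r' ∈ N.face x, N.touches (N.fst r) r' ∨ N.touches (N.snd r) r'}

/-- The ergodic routes `Λ₂(x) = R \ (Λ(x) ∪ Λ₁(x))`. -/
def ergodicRoutes (N : StarNetwork S R) (x : R → ℝ) : Set R :=
  (N.face x ∪ N.jammed x)ᶜ

/-- The local rate function `L(x, D) = ∑_{ij ∈ Λ(x) ∪ Λ₁(x)} l(D_ij ‖ λ_ij, μ_ij(x))`
(its finite part; `L(x,D) = +∞` when `D_ij < 0` for some `ij ∉ Λ(x)`). -/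
def locRate (N : StarNetwork S R) (x D : R → ℝ) : ℝ :=
  ∑ r : R, if r ∈ N.face x ∪ N.jammed x then mmCost (D r) (N.lam r) (N.srv x r) else 0

/-- The sample path rate function `I_T(φ) = ∫₀ᵀ L(φ(t), φ̇(t)) dt ∈ [0,∞]` if `φ` is
absolutely continuous on `[0,T]`, and `I_T(φ) = +∞` otherwise (the infimum over an
empty family is `⊤`; any two densities of `φ` coincide a.e. on `[0,T]`, so the
infimum is the common value of the integral). -/
def pathRate (N : StarNetwork S R) (T : ℝ) (φ : ℝ → R → ℝ) : ℝ≥0∞ :=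
  ⨅ (f : ℝ → R → ℝ) (_ : IntegrableOn f (Set.Icc 0 T))
    (_ : ∀ t ∈ Set.Icc (0 : ℝ) T, φ t = φ 0 + ∫ s in (0 : ℝ)..t, f s),
    ∫⁻ t in Set.Ioc (0 : ℝ) T, ENNReal.ofReal (N.locRate (φ t) (f t))

end StarNetwork

/-!
By Fenchel–Young, `l(D‖λ,μ) ≥ θ D - λ (e^θ - 1) - μ (e^{-θ} - 1)` for every `θ`. Taking
`θ = ±A` and using `μ_ij(x) ≤ μ_ij C_i`, the local rate is uniformly superlinear:
`A ∑ |D_ij| ≤ L(x, D) + B(A)` with `B(A)` independent of `x`, provided `D` vanishes on the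
empty routes (for `μ = 0`, `l(D‖λ,0) = λ - D` grows only linearly as `D → -∞`). A density of
`φ` does vanish a.e. there, because a derivative vanishes a.e. on a level set. Integrating
over the union `U` of the intervals gives `A ∫_U |φ̇| ≤ I_T(φ) + B |U|`, which is at most
`A ε` for `A = 2 (K + 1) / ε` and `|U| ≤ (K + 1) / (B + 1)`.
-/

open Set Function Topology Real

theorem HasDerivAt.eq_zero_of_frequently_eq {𝕜 E : Type*} [NontriviallyNormedField 𝕜]
    [NormedAddCommGroup E] [NormedSpace 𝕜 E] {F : 𝕜 → E} {F' : E} {x : 𝕜}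
    (hF : HasDerivAt F F' x) (h : ∃ᶠ y in 𝓝[≠] x, F y = F x) : F' = 0 :=
  tendsto_nhds_unique_of_frequently_eq hF.tendsto_slope tendsto_const_nhds
    (h.mono fun y hy => by simp [slope, hy])

/-- Only countably many points of a level set are isolated in it, and at every other point
an existing derivative must vanish. -/
theorem ae_eq_zero_of_ae_hasDerivAt_of_eq {E : Type*} [NormedAddCommGroup E] [NormedSpace ℝ E]
    {μ : Measure ℝ} [NullSingletonClass μ] {F F' : ℝ → E}
    (hF : ∀ᵐ x ∂μ, HasDerivAt F (F' x) x) (c : E) : ∀ᵐ x ∂μ, F x = c → F' x = 0 := by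
  have hisolated : {x ∈ F ⁻¹' {c} | 𝓝[F ⁻¹' {c} ∩ Ioi x] x = ⊥}.Countable :=
    countable_setOfPred_isolated_right_within
  filter_upwards [hF, hisolated.ae_notMem μ] with x hx hx_acc hFx
  refine hx.eq_zero_of_frequently_eq (by_contra fun h => hx_acc ⟨hFx, ?_⟩)
  rw [← Filter.eventually_false_iff_eq_bot]
  filter_upwards [nhdsWithin_mono x (fun y hy => ne_of_gt hy.2) (Filter.not_frequently.mp h),
    self_mem_nhdsWithin] with y hy hyc using hy (hyc.1.trans hFx.symm)

/-- `p = lam e^θ*` and `q = mu e^(-θ*)` at the maximizing tilt `θ* = log (p / lam)`. -/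
theorem exists_mmCost_eq {D lam mu : ℝ} (hl : 0 < lam) (hm : 0 < mu) :
    ∃ p > 0, ∃ q > 0, p * q = lam * mu ∧ D = p - q ∧
      mmCost D lam mu = D * log (p / lam) + lam + mu - (p + q) := by
  set s := √(D ^ 2 + 4 * lam * mu)
  have hs : s ^ 2 = D ^ 2 + 4 * lam * mu := sq_sqrt (by positivity)
  have hDs : |D| < s := abs_lt_of_sq_lt_sq (by nlinarith [mul_pos hl hm]) (sqrt_nonneg _)
  refine ⟨(D + s) / 2, by linarith [neg_abs_le D], (s - D) / 2, by linarith [le_abs_self D],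
    by nlinarith, by ring, ?_⟩
  rw [mmCost, div_div]
  ring

/-- Fenchel–Young: `mmCost D lam mu` is the Legendre transform of the cumulant
`θ ↦ lam (e^θ - 1) + mu (e^{-θ} - 1)`. -/
theorem le_mmCost {lam mu : ℝ} (hl : 0 < lam) (hm : 0 < mu) (D θ : ℝ) :
    θ * D - lam * (exp θ - 1) - mu * (exp (-θ) - 1) ≤ mmCost D lam mu := by
  obtain ⟨p, hp, q, hq, hpq, rfl, hcost⟩ := exists_mmCost_eq (D := D) hl hm
  obtain ⟨y, rfl⟩ : ∃ y, θ = y + log (p / lam) := ⟨θ - log (p / lam), by ring⟩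
  have hp_exp : lam * exp (y + log (p / lam)) = p * exp y := by
    rw [exp_add, exp_log (by positivity)]; field_simp
  have hq_exp : mu * exp (-(y + log (p / lam))) = q * exp (-y) := by
    rw [neg_add, exp_add, exp_neg (log _), exp_log (by positivity), inv_div,
      mul_comm, mul_assoc, div_mul_eq_mul_div, ← hpq]
    field_simp
  rw [hcost]
  nlinarith [mul_le_mul_of_nonneg_left (add_one_le_exp y) hp.le,
    mul_le_mul_of_nonneg_left (add_one_le_exp (-y)) hq.le]

theorem mul_abs_sub_le_mmCost {lam mu M A : ℝ} (hl : 0 < lam) (hm : 0 < mu) (hM : mu ≤ M)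
    (hA : 0 ≤ A) (D : ℝ) : A * |D| - (lam + M) * exp A ≤ mmCost D lam mu := by
  have h1 : exp (-A) ≤ 1 := exp_le_one_iff.mpr (by linarith)
  have h2 : 0 < exp A := exp_pos A
  rcases le_or_gt 0 D with hD | hD
  · have := le_mmCost hl hm D A
    rw [abs_of_nonneg hD]
    nlinarith
  · have := le_mmCost hl hm D (-A)
    rw [abs_of_neg hD, neg_neg] at *
    nlinarith

theorem volume_iUnion_Ioo_le {ι : Type*} [Fintype ι] {a b : ι → ℝ} (hab : ∀ j, a j ≤ b j) :
    volume (⋃ j, Ioo (a j) (b j)) ≤ ENNReal.ofReal (∑ j, (b j - a j)) := by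
  rw [ENNReal.ofReal_sum_of_nonneg fun j _ => sub_nonneg.mpr (hab j)]
  simpa only [Real.volume_Ioo] using
    measure_iUnion_fintype_le (volume : Measure ℝ) fun j => Ioo (a j) (b j)

theorem const_mul_setLIntegral_le {α : Type*} [MeasurableSpace α] {μ : Measure α}
    {s U : Set α} {G L : α → ENNReal} {A B : ENNReal} (hUs : U ⊆ s)
    (h : ∀ᵐ t ∂μ.restrict s, A * G t ≤ L t + B) :
    A * ∫⁻ t in U, G t ∂μ ≤ ∫⁻ t in s, L t ∂μ + B * μ U :=
  calc A * ∫⁻ t in U, G t ∂μ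
      ≤ ∫⁻ t in U, A * G t ∂μ := lintegral_const_mul_le A G
    _ ≤ ∫⁻ t in U, (L t + B) ∂μ := lintegral_mono_ae (ae_restrict_of_ae_restrict_of_subset hUs h)
    _ = ∫⁻ t in U, L t ∂μ + B * μ U := by
      rw [lintegral_add_right _ measurable_const, setLIntegral_const]
    _ ≤ ∫⁻ t in s, L t ∂μ + B * μ U := by gcongr

section Density

variable {E : Type*} [NormedAddCommGroup E] [NormedSpace ℝ E]

def HasDensityOn (φ f : ℝ → E) (T : ℝ) : Prop :=
  IntegrableOn f (Icc 0 T) ∧ ∀ t ∈ Icc 0 T, φ t = φ 0 + ∫ s in (0 : ℝ)..t, f s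

namespace HasDensityOn

variable {φ f : ℝ → E} {T a b : ℝ}

theorem intervalIntegrable (h : HasDensityOn φ f T) (ha : a ∈ Icc 0 T) (hb : b ∈ Icc 0 T) :
    IntervalIntegrable f volume a b :=
  (h.1.mono_set (uIcc_subset_Icc ha hb)).intervalIntegrable

theorem sub_eq_integral (h : HasDensityOn φ f T) (ha : a ∈ Icc 0 T) (hb : b ∈ Icc 0 T) :
    φ b - φ a = ∫ s in a..b, f s := by
  have h0 : (0 : ℝ) ∈ Icc 0 T := ⟨le_rfl, ha.1.trans ha.2⟩
  rw [h.2 b hb, h.2 a ha, ← intervalIntegral.integral_interval_sub_left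
    (h.intervalIntegrable h0 hb) (h.intervalIntegrable h0 ha)]
  abel

theorem enorm_sub_le_lintegral (h : HasDensityOn φ f T) (ha : a ∈ Icc 0 T) (hb : b ∈ Icc 0 T)
    (hab : a ≤ b) : ‖φ b - φ a‖ₑ ≤ ∫⁻ t in Ioo a b, ‖f t‖ₑ := by
  rw [h.sub_eq_integral ha hb, intervalIntegral.integral_of_le hab, integral_Ioc_eq_integral_Ioo]
  exact enorm_integral_le_lintegral_enorm _

theorem apply {ι : Type*} [Fintype ι] [CompleteSpace E] {φ f : ℝ → ι → E}
    (h : HasDensityOn φ f T) (i : ι) : HasDensityOn (φ · i) (f · i) T := by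
  refine ⟨?_, fun t ht => ?_⟩
  · exact Integrable.eval h.1 i
  · have h0 : (0 : ℝ) ∈ Icc 0 T := ⟨le_rfl, ht.1.trans ht.2⟩
    dsimp only
    rw [h.2 t ht, Pi.add_apply]
    exact congrArg _ ((ContinuousLinearMap.proj (R := ℝ) i).intervalIntegral_comp_comm
      (h.intervalIntegrable h0 ht)).symm

theorem ae_eq_zero_of_eq [CompleteSpace E] (h : HasDensityOn φ f T) (c : E) :
    ∀ᵐ t ∂volume.restrict (Icc 0 T), φ t = c → f t = 0 := by
  rcases lt_or_ge T 0 with hT | hT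
  · simp [Icc_eq_empty_of_lt hT]
  have hT' : T ∈ Icc 0 T := ⟨hT, le_rfl⟩
  have hderiv : ∀ᵐ t ∂volume.restrict (Icc 0 T),
      HasDerivAt (fun x => ∫ s in (0 : ℝ)..x, f s) (f t) t := by
    refine (ae_restrict_iff' measurableSet_Icc).mpr ?_
    filter_upwards [(h.intervalIntegrable (left_mem_Icc.mpr hT) hT').ae_hasDerivAt_integral]
      with t ht htT
    exact ht (Icc_subset_uIcc htT) 0 left_mem_uIcc
  filter_upwards [ae_eq_zero_of_ae_hasDerivAt_of_eq hderiv (c - φ 0),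
    ae_restrict_mem measurableSet_Icc] with t ht htT hφt
  exact ht (by rw [← hφt, h.2 t htT]; abel)

theorem sum_enorm_sub_le_lintegral {ι : Type*} [Fintype ι] {a b : ι → ℝ}
    (h : HasDensityOn φ f T) (hab : ∀ j, a j ∈ Icc 0 T ∧ b j ∈ Icc 0 T ∧ a j ≤ b j)
    (hdisj : Pairwise (Disjoint on fun j => Ioo (a j) (b j))) :
    ∑ j, ‖φ (b j) - φ (a j)‖ₑ ≤ ∫⁻ t in ⋃ j, Ioo (a j) (b j), ‖f t‖ₑ := by
  rw [lintegral_iUnion (fun j => measurableSet_Ioo) hdisj, tsum_fintype]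
  exact Finset.sum_le_sum fun j _ => h.enorm_sub_le_lintegral (hab j).1 (hab j).2.1 (hab j).2.2

theorem sum_sum_enorm_sub_le_lintegral [CompleteSpace E] {R : Type*} [Fintype R]
    {φ f : ℝ → R → E} {ι : Type*} [Fintype ι] {a b : ι → ℝ} (h : HasDensityOn φ f T)
    (hab : ∀ j, a j ∈ Icc 0 T ∧ b j ∈ Icc 0 T ∧ a j ≤ b j)
    (hdisj : Pairwise (Disjoint on fun j => Ioo (a j) (b j))) :
    ∑ j, ∑ r, ‖φ (b j) r - φ (a j) r‖ₑ ≤ ∫⁻ t in ⋃ j, Ioo (a j) (b j), ∑ r, ‖f t r‖ₑ := by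
  have hU : ⋃ j, Ioo (a j) (b j) ⊆ Icc 0 T :=
    iUnion_subset fun j => Ioo_subset_Icc_self.trans (Icc_subset_Icc (hab j).1.1 (hab j).2.1.2)
  rw [Finset.sum_comm,
    lintegral_finsetSum' _ fun r _ => ((h.apply r).1.mono_set hU).aestronglyMeasurable.enorm]
  exact Finset.sum_le_sum fun r _ => (h.apply r).sum_enorm_sub_le_lintegral hab hdisj

end HasDensityOn

end Density

namespace StarNetwork

variable {S R : Type*} [Fintype R] (N : StarNetwork S R) {x : R → ℝ}

theorem le_load (hx : ∀ r, 0 ≤ x r) {i : S} {r : R} (hi : N.touches i r) :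
    x r ≤ N.load x i := by
  simpa [load, hi] using Finset.single_le_sum (f := fun r' => if N.touches i r' then x r' else 0)
    (fun r' _ => by split_ifs <;> [exact hx r'; exact le_rfl]) (Finset.mem_univ r)

theorem srv_pos (hx : ∀ r, 0 ≤ x r) {r : R} (hr : 0 < x r) : 0 < N.srv x r := by
  have h₁ := hr.trans_le (N.le_load hx (Or.inl rfl : N.touches (N.fst r) r))
  have h₂ := hr.trans_le (N.le_load hx (Or.inr rfl : N.touches (N.snd r) r))
  have := N.C_pos (N.fst r); have := N.C_pos (N.snd r); have := N.mu_pos r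
  rw [srv, if_pos hr]
  exact mul_pos (by positivity) (lt_min (by positivity) (by positivity))

theorem srv_le (hx : ∀ r, 0 ≤ x r) (r : R) : N.srv x r ≤ N.mu r * N.C (N.fst r) := by
  have := N.C_pos (N.fst r); have := N.mu_pos r
  rw [srv]
  split_ifs with hr
  · have hload := N.le_load hx (Or.inl rfl : N.touches (N.fst r) r)
    calc N.mu r * x r * min (N.C (N.fst r) / N.load x (N.fst r)) _
        ≤ N.mu r * x r * (N.C (N.fst r) / N.load x (N.fst r)) := by gcongr; exact min_le_left _ _
      _ ≤ N.mu r * x r * (N.C (N.fst r) / x r) := by gcongr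
      _ = N.mu r * N.C (N.fst r) := by field_simp
  · positivity

theorem srv_of_eq_zero {r : R} (hr : x r = 0) : N.srv x r = 0 := by
  simp [srv, hr]

theorem exists_mul_sum_abs_le_locRate {A : ℝ} (hA : 0 ≤ A) :
    ∃ B ≥ 0, ∀ x D : R → ℝ, (∀ r, 0 ≤ x r) → (∀ r, x r = 0 → D r = 0) →
      A * ∑ r, |D r| ≤ N.locRate x D + B := by
  have hterm (r : R) : 0 ≤ (N.lam r + N.mu r * N.C (N.fst r)) * exp A := by
    have := N.lam_pos r; have := N.mu_pos r; have := N.C_pos (N.fst r)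
    positivity
  refine ⟨∑ r, (N.lam r + N.mu r * N.C (N.fst r)) * exp A,
    Finset.sum_nonneg fun r _ => hterm r, fun x D hx hD => ?_⟩
  rw [locRate, Finset.mul_sum, ← Finset.sum_add_distrib]
  refine Finset.sum_le_sum fun r _ => ?_
  rcases (hx r).lt_or_eq with hr | hr
  · rw [if_pos (mem_union_left (N.jammed x) (show r ∈ N.face x from hr))]
    linarith [mul_abs_sub_le_mmCost (N.lam_pos r) (N.srv_pos hx hr) (N.srv_le hx r) hA (D r)]
  · have hidle : mmCost 0 (N.lam r) 0 = N.lam r := by simp [mmCost]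
    rw [hD r hr.symm, abs_zero, mul_zero, N.srv_of_eq_zero hr.symm, hidle]
    split_ifs <;> linarith [N.lam_pos r, hterm r]

theorem ae_ofReal_mul_sum_enorm_le_locRate {A B T : ℝ} (hA : 0 ≤ A)
    (hB : ∀ x D : R → ℝ, (∀ r, 0 ≤ x r) → (∀ r, x r = 0 → D r = 0) →
      A * ∑ r, |D r| ≤ N.locRate x D + B)
    {φ f : ℝ → R → ℝ} (hφf : HasDensityOn φ f T) (hφ : ∀ t ∈ Icc 0 T, ∀ r, 0 ≤ φ t r) :
    ∀ᵐ t ∂volume.restrict (Icc 0 T), ENNReal.ofReal A * ∑ r, ‖f t r‖ₑ ≤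
      ENNReal.ofReal (N.locRate (φ t) (f t)) + ENNReal.ofReal B := by
  have hidle : ∀ᵐ t ∂volume.restrict (Icc 0 T), ∀ r, φ t r = 0 → f t r = 0 :=
    ae_all_iff.mpr fun r => (hφf.apply r).ae_eq_zero_of_eq 0
  filter_upwards [hidle, ae_restrict_mem measurableSet_Icc] with t ht htT
  simp only [Real.enorm_eq_ofReal_abs]
  rw [← ENNReal.ofReal_sum_of_nonneg fun r _ => abs_nonneg _, ← ENNReal.ofReal_mul hA]
  exact (ENNReal.ofReal_le_ofReal (hB _ _ (hφ t htT) ht)).trans ENNReal.ofReal_add_le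

theorem exists_hasDensityOn_lintegral_lt {T : ℝ} {φ : ℝ → R → ℝ} {c : ENNReal}
    (h : N.pathRate T φ < c) : ∃ f, HasDensityOn φ f T ∧
      ∫⁻ t in Ioc 0 T, ENNReal.ofReal (N.locRate (φ t) (f t)) < c := by
  simp only [pathRate, iInf_lt_iff] at h
  obtain ⟨f, hfi, hφf, hf⟩ := h
  exact ⟨f, ⟨hfi, hφf⟩, hf⟩

end StarNetwork

theorem pathRate_uniform_abs_continuity_general {S R : Type*} [Fintype R]
    (N : StarNetwork S R) (T K ε : ℝ) (hK : 0 ≤ K) (hε : 0 < ε) :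
    ∃ δ > 0, ∀ φ f : ℝ → R → ℝ,
      IntegrableOn f (Set.Icc 0 T) →
      (∀ t ∈ Set.Icc (0 : ℝ) T, φ t = φ 0 + ∫ s in (0 : ℝ)..t, f s) →
      (∀ t ∈ Set.Icc (0 : ℝ) T, ∀ r, 0 ≤ φ t r) →
      N.pathRate T φ ≤ ENNReal.ofReal K →
      ∀ (m : ℕ) (a b : Fin m → ℝ),
        (∀ j, a j ∈ Set.Icc (0 : ℝ) T ∧ b j ∈ Set.Icc (0 : ℝ) T ∧ a j ≤ b j) →
        (∀ j k, j ≠ k → Disjoint (Set.Ioo (a j) (b j)) (Set.Ioo (a k) (b k))) →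
        (∑ j, (b j - a j)) ≤ δ →
        ∑ j, ∑ r : R, |φ (b j) r - φ (a j) r| ≤ ε := by
  set A := 2 * (K + 1) / ε
  have hA : 0 < A := by positivity
  obtain ⟨B, hB0, hB⟩ := N.exists_mul_sum_abs_le_locRate hA.le
  refine ⟨(K + 1) / (B + 1), by positivity, fun φ _ _ _ hφ hrate m a b hab hdisj hsum => ?_⟩
  obtain ⟨f, hφf, hLf⟩ := N.exists_hasDensityOn_lintegral_lt
    (hrate.trans_lt ((ENNReal.ofReal_lt_ofReal_iff (by linarith)).mpr (lt_add_one K)))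
  have hUT : ⋃ j, Ioo (a j) (b j) ⊆ Ioc 0 T :=
    iUnion_subset fun j => Ioo_subset_Ioc_self.trans (Ioc_subset_Ioc (hab j).1.1 (hab j).2.1.2)
  have hBδ : B * ((K + 1) / (B + 1)) ≤ K + 1 := by
    rw [mul_div_assoc']; exact div_le_of_le_mul₀ (by linarith) (by linarith) (by nlinarith)
  have hmass : ENNReal.ofReal A * ∫⁻ t in ⋃ j, Ioo (a j) (b j), ∑ r, ‖f t r‖ₑ
      ≤ ENNReal.ofReal A * ENNReal.ofReal ε :=
    calc _ ≤ _ := const_mul_setLIntegral_le hUT (ae_restrict_of_ae_restrict_of_subset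
            Ioc_subset_Icc_self (N.ae_ofReal_mul_sum_enorm_le_locRate hA.le hB hφf hφ))
      _ ≤ ENNReal.ofReal (K + 1) + ENNReal.ofReal B * ENNReal.ofReal ((K + 1) / (B + 1)) := by
        gcongr
        exact (volume_iUnion_Ioo_le fun j => (hab j).2.2).trans (ENNReal.ofReal_le_ofReal hsum)
      _ ≤ ENNReal.ofReal (A * ε) := by
        rw [← ENNReal.ofReal_mul hB0, ← ENNReal.ofReal_add (by positivity) (by positivity)]
        exact ENNReal.ofReal_le_ofReal (by rw [div_mul_cancel₀ _ hε.ne']; linarith)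
      _ = ENNReal.ofReal A * ENNReal.ofReal ε := ENNReal.ofReal_mul hA.le
  rw [← ENNReal.ofReal_le_ofReal_iff hε.le, ENNReal.ofReal_sum_of_nonneg fun j _ => by positivity]
  simp_rw [ENNReal.ofReal_sum_of_nonneg fun r _ => abs_nonneg _, ← Real.enorm_eq_ofReal_abs]
  exact (hφf.sum_sum_enorm_sub_le_lintegral hab hdisj).trans
    ((ENNReal.mul_le_mul_iff_right (by simpa using hA) ENNReal.ofReal_ne_top).mp hmass)

/-- For every `K ≥ 0` and `ε > 0` there exists `δ > 0` (depending only on `K`, `ε`, `T`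
and the network data, not on `φ`) with the following property: for every absolutely
continuous path `φ : [0,T] → ℝ₊^R` with `I_T(φ) ≤ K` and every finite collection of
pairwise nonoverlapping intervals `[a_j, b_j] ⊆ [0,T]` with `∑_j (b_j − a_j) ≤ δ`, one
has `∑_j ∑_{ij ∈ R} |φ_ij(b_j) − φ_ij(a_j)| ≤ ε`. -/
theorem pathRate_uniform_abs_continuity {S R : Type*} [Fintype S] [Fintype R]
    (N : StarNetwork S R) (T K ε : ℝ) (hT : 0 < T) (hK : 0 ≤ K) (hε : 0 < ε) :
    ∃ δ > 0, ∀ φ f : ℝ → R → ℝ,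
      IntegrableOn f (Set.Icc 0 T) →
      (∀ t ∈ Set.Icc (0 : ℝ) T, φ t = φ 0 + ∫ s in (0 : ℝ)..t, f s) →
      (∀ t ∈ Set.Icc (0 : ℝ) T, ∀ r, 0 ≤ φ t r) →
      N.pathRate T φ ≤ ENNReal.ofReal K →
      ∀ (m : ℕ) (a b : Fin m → ℝ),
        (∀ j, a j ∈ Set.Icc (0 : ℝ) T ∧ b j ∈ Set.Icc (0 : ℝ) T ∧ a j ≤ b j) →
        (∀ j k, j ≠ k → Disjoint (Set.Ioo (a j) (b j)) (Set.Ioo (a k) (b k))) →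
        (∑ j, (b j - a j)) ≤ δ →
        ∑ j, ∑ r : R, |φ (b j) r - φ (a j) r| ≤ ε :=
  pathRate_uniform_abs_continuity_general N T K ε hK hε
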